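/- arXiv:2104.08907 — 2 statements merged into one kernel-verified Lean document; each statement's English description precedes it below -/
import Mathlib

section
/- Let R₁, …, Rₙ be pseudo BL-rings. Then the direct product R = R₁ × ⋯ × Rₙ is a pseudo BL-ring. -/
set_option linter.unnecessarySimpa false

namespace PBL

variable {R : Type*} [NonUnitalRing R]

/-- The right residual `I → J = {x | x·i ∈ J for all i ∈ I}`, a two-sided ideal. -/
def rres (I J : TwoSidedIdeal R) : TwoSidedIdeal R :=
  TwoSidedIdeal.mk' {x | ∀ i ∈ I, x * i ∈ J}
    (fun i _ => by simpa using J.zero_mem)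
    (fun {x y} hx hy i hi => by simpa [add_mul] using J.add_mem (hx i hi) (hy i hi))
    (fun {x} hx i hi => by simpa [neg_mul] using J.neg_mem (hx i hi))
    (fun {r x} hx i hi => by simpa [mul_assoc] using J.mul_mem_left r _ (hx i hi))
    (fun {x r} hx i hi => by
      have : x * (r * i) ∈ J := hx _ (I.mul_mem_left r i hi)
      simpa [mul_assoc] using this)

/-- The left residual `I ⇝ J = {x | i·x ∈ J for all i ∈ I}`, a two-sided ideal. -/
def lres (I J : TwoSidedIdeal R) : TwoSidedIdeal R :=
  TwoSidedIdeal.mk' {x | ∀ i ∈ I, i * x ∈ J}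
    (fun i _ => by simpa using J.zero_mem)
    (fun {x y} hx hy i hi => by simpa [mul_add] using J.add_mem (hx i hi) (hy i hi))
    (fun {x} hx i hi => by simpa [mul_neg] using J.neg_mem (hx i hi))
    (fun {r x} hx i hi => by
      have : (i * r) * x ∈ J := hx _ (I.mul_mem_right i r hi)
      simpa [mul_assoc] using this)
    (fun {x r} hx i hi => by
      have : (i * x) * r ∈ J := J.mul_mem_right _ r (hx i hi)
      simpa [mul_assoc] using this)

/-- The product `I·J` of two two-sided ideals: the two-sided ideal generated by (equivalently,
the additive span of) the set of products `i·j` with `i ∈ I`, `j ∈ J`. -/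
def prod (I J : TwoSidedIdeal R) : TwoSidedIdeal R :=
  TwoSidedIdeal.span {x | ∃ i ∈ I, ∃ j ∈ J, x = i * j}

variable (R) in
/-- PBLR-1: `I ∩ J = I·(I ⇝ J) = (I → J)·I` for all two-sided ideals `I`, `J`. -/
def PBLR1 : Prop :=
  ∀ I J : TwoSidedIdeal R, I ⊓ J = prod I (lres I J) ∧ I ⊓ J = prod (rres I J) I

variable (R) in
/-- PBLR-2: `(I → J) + (J → I) = R` and `(I ⇝ J) + (J ⇝ I) = R` for all two-sided
ideals `I`, `J` (the sum of two-sided ideals being their join). -/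
def PBLR2 : Prop :=
  ∀ I J : TwoSidedIdeal R, rres I J ⊔ rres J I = ⊤ ∧ lres I J ⊔ lres J I = ⊤

variable (R) in
/-- A ring is generated by idempotents if for every `x` there is an idempotent `e` with
`e·x = x = x·e`. -/
def GenByIdem : Prop :=
  ∀ x : R, ∃ e : R, e * e = e ∧ e * x = x ∧ x * e = x

variable (R) in
/-- A pseudo BL-ring: a ring generated by idempotents satisfying PBLR-1 and PBLR-2. -/
def IsPseudoBLRing : Prop :=
  GenByIdem R ∧ PBLR1 R ∧ PBLR2 R

/-! ### Auxiliary lemmas -/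

lemma mem_rres {I J : TwoSidedIdeal R} {x : R} :
    x ∈ rres I J ↔ ∀ i ∈ I, x * i ∈ J := TwoSidedIdeal.mem_mk' _ _ _ _ _ _ _

lemma mem_lres {I J : TwoSidedIdeal R} {x : R} :
    x ∈ lres I J ↔ ∀ i ∈ I, i * x ∈ J := TwoSidedIdeal.mem_mk' _ _ _ _ _ _ _

lemma prod_le {I J K : TwoSidedIdeal R}
    (h : ∀ i ∈ I, ∀ j ∈ J, i * j ∈ K) : prod I J ≤ K := fun x hx =>
  TwoSidedIdeal.mem_span_iff.mp hx K (by rintro _ ⟨i, hi, j, hj, rfl⟩; exact h i hi j hj)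

lemma mul_mem_prod {I J : TwoSidedIdeal R} {i j : R} (hi : i ∈ I) (hj : j ∈ J) :
    i * j ∈ prod I J :=
  TwoSidedIdeal.subset_span ⟨i, hi, j, hj, rfl⟩

section Pi

variable {n : ℕ} {Rs : Fin n → Type*} [∀ i, NonUnitalRing (Rs i)]

/-- The `i`-th component of a two-sided ideal of a product ring. -/
def comp (i : Fin n) (I : TwoSidedIdeal (∀ j, Rs j)) : TwoSidedIdeal (Rs i) :=
  TwoSidedIdeal.mk' {a | Pi.single i a ∈ I}
    (by simpa using I.zero_mem)
    (fun {x y} hx hy => by simpa [Pi.single_add] using I.add_mem hx hy)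
    (fun {x} hx => by simpa [Pi.single_neg] using I.neg_mem hx)
    (fun {r x} hx => by
      have := I.mul_mem_left (Pi.single i r) _ hx
      simpa [← Pi.single_mul] using this)
    (fun {x r} hx => by
      have := I.mul_mem_right _ (Pi.single i r) hx
      simpa [← Pi.single_mul] using this)

lemma mem_comp {i : Fin n} {I : TwoSidedIdeal (∀ j, Rs j)} {a : Rs i} :
    a ∈ comp i I ↔ Pi.single i a ∈ I := TwoSidedIdeal.mem_mk' _ _ _ _ _ _ _

lemma comp_mono {i : Fin n} {I J : TwoSidedIdeal (∀ j, Rs j)} (h : I ≤ J) :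
    comp i I ≤ comp i J := fun _ ha => mem_comp.mpr (h (mem_comp.mp ha))

variable (hg : ∀ i, GenByIdem (Rs i))
include hg

/-- Membership in an ideal of a product ring is componentwise. -/
lemma mem_iff_comp {I : TwoSidedIdeal (∀ j, Rs j)} {x : ∀ j, Rs j} :
    x ∈ I ↔ ∀ i, x i ∈ comp i I := by
  constructor
  · intro hx i
    obtain ⟨e, -, hex, -⟩ := hg i (x i)
    rw [mem_comp]
    have : Pi.single i (x i) = Pi.single i e * x := by
      rw [← hex]; exact Pi.single_mul_left e
    rw [this]
    exact I.mul_mem_left _ _ hx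
  · intro hx
    have : x = ∑ i, Pi.single i (x i) := (Finset.univ_sum_single x).symm
    rw [this]
    exact I.finsetSum_mem _ _ fun i _ => mem_comp.mp (hx i)

lemma ideal_ext {I J : TwoSidedIdeal (∀ j, Rs j)}
    (h : ∀ i, comp i I = comp i J) : I = J := by
  ext x
  rw [mem_iff_comp hg, mem_iff_comp hg]
  exact ⟨fun hx i => (h i) ▸ hx i, fun hx i => (h i) ▸ hx i⟩

lemma comp_inf {i : Fin n} {I J : TwoSidedIdeal (∀ j, Rs j)} :
    comp i (I ⊓ J) = comp i I ⊓ comp i J := by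
  ext a
  simp only [mem_comp, TwoSidedIdeal.mem_inf]

lemma comp_top {i : Fin n} : comp i (⊤ : TwoSidedIdeal (∀ j, Rs j)) = ⊤ := by
  ext a; simp [mem_comp, TwoSidedIdeal.mem_top]

omit hg in
lemma single_mem_iff_ne_or {i j : Fin n} {a : Rs i} {I : TwoSidedIdeal (∀ j, Rs j)}
    (h : Pi.single i a ∈ I) : a ∈ comp i I := mem_comp.mpr h

lemma comp_rres {i : Fin n} {I J : TwoSidedIdeal (∀ j, Rs j)} :
    comp i (rres I J) = rres (comp i I) (comp i J) := by
  ext a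
  rw [mem_comp, mem_rres, mem_rres]
  constructor
  · intro h b hb
    rw [mem_comp] at hb ⊢
    have := h _ hb
    rwa [← Pi.single_mul] at this
  · intro h y hy
    rw [mem_iff_comp hg]
    intro j
    rcases eq_or_ne j i with rfl | hne
    · have : (Pi.single j a * y) j = a * y j := by
        simp [Pi.single_eq_same]
      rw [this]
      exact h _ ((mem_iff_comp hg).mp hy j)
    · have : (Pi.single i a * y) j = 0 := by
        simp [Pi.single_eq_of_ne hne]
      rw [this]
      exact (comp j J).zero_mem

lemma comp_lres {i : Fin n} {I J : TwoSidedIdeal (∀ j, Rs j)} :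
    comp i (lres I J) = lres (comp i I) (comp i J) := by
  ext a
  rw [mem_comp, mem_lres, mem_lres]
  constructor
  · intro h b hb
    rw [mem_comp] at hb ⊢
    have := h _ hb
    rwa [← Pi.single_mul] at this
  · intro h y hy
    rw [mem_iff_comp hg]
    intro j
    rcases eq_or_ne j i with rfl | hne
    · have : (y * Pi.single j a) j = y j * a := by
        simp [Pi.single_eq_same]
      rw [this]
      exact h _ ((mem_iff_comp hg).mp hy j)
    · have : (y * Pi.single i a) j = 0 := by
        simp [Pi.single_eq_of_ne hne]
      rw [this]
      exact (comp j J).zero_mem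

lemma comp_prod {i : Fin n} {I J : TwoSidedIdeal (∀ j, Rs j)} :
    comp i (prod I J) = prod (comp i I) (comp i J) := by
  apply le_antisymm
  · intro a ha
    rw [mem_comp] at ha
    -- prod I J ≤ comap of prod over the i-th coordinate
    have key : ∀ z ∈ prod I J, z i ∈ prod (comp i I) (comp i J) := by
      intro z hz
      let K : TwoSidedIdeal (∀ j, Rs j) :=
        TwoSidedIdeal.mk' {x | x i ∈ prod (comp i I) (comp i J)}
          (by simpa using (prod (comp i I) (comp i J)).zero_mem)
          (fun {x y} hx hy => by
            simpa using (prod (comp i I) (comp i J)).add_mem hx hy)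
          (fun {x} hx => by
            simpa using (prod (comp i I) (comp i J)).neg_mem hx)
          (fun {r x} hx => (prod (comp i I) (comp i J)).mul_mem_left (r i) _ hx)
          (fun {x r} hx => (prod (comp i I) (comp i J)).mul_mem_right _ (r i) hx)
      have hK : prod I J ≤ K := prod_le fun u hu v hv => by
        rw [TwoSidedIdeal.mem_mk']
        exact mul_mem_prod ((mem_iff_comp hg).mp hu i) ((mem_iff_comp hg).mp hv i)
      have := hK hz
      rwa [TwoSidedIdeal.mem_mk'] at this
    have := key _ ha
    simpa using this
  · exact prod_le fun u hu v hv => by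
      rw [mem_comp, Pi.single_mul]
      exact mul_mem_prod (mem_comp.mp hu) (mem_comp.mp hv)

end Pi

/-- a finite direct product of pseudo BL-rings is a pseudo BL-ring. -/
theorem stmt_15 (n : ℕ) (Rs : Fin n → Type*) [∀ i, NonUnitalRing (Rs i)]
    (h : ∀ i, IsPseudoBLRing (Rs i)) : IsPseudoBLRing (∀ i, Rs i) := by
  have hg : ∀ i, GenByIdem (Rs i) := fun i => (h i).1
  refine ⟨?_, ?_, ?_⟩
  · -- GenByIdem
    intro x
    choose e he hex hxe using fun i => hg i (x i)
    exact ⟨e, funext fun i => he i, funext fun i => hex i, funext fun i => hxe i⟩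
  · -- PBLR1
    intro I J
    constructor
    · refine ideal_ext hg fun i => ?_
      rw [comp_inf hg, comp_prod hg, comp_lres hg]
      exact ((h i).2.1 (comp i I) (comp i J)).1
    · refine ideal_ext hg fun i => ?_
      rw [comp_inf hg, comp_prod hg, comp_rres hg]
      exact ((h i).2.1 (comp i I) (comp i J)).2
  · -- PBLR2
    intro I J
    constructor
    · refine ideal_ext hg fun i => ?_
      rw [comp_top hg]
      refine top_le_iff.mp ?_
      calc (⊤ : TwoSidedIdeal (Rs i))
          = rres (comp i I) (comp i J) ⊔ rres (comp i J) (comp i I) :=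
            ((h i).2.2 (comp i I) (comp i J)).1.symm
        _ ≤ comp i (rres I J) ⊔ comp i (rres J I) := by
            rw [comp_rres hg, comp_rres hg]
        _ ≤ comp i (rres I J ⊔ rres J I) :=
            sup_le (comp_mono le_sup_left) (comp_mono le_sup_right)
    · refine ideal_ext hg fun i => ?_
      rw [comp_top hg]
      refine top_le_iff.mp ?_
      calc (⊤ : TwoSidedIdeal (Rs i))
          = lres (comp i I) (comp i J) ⊔ lres (comp i J) (comp i I) :=
            ((h i).2.2 (comp i I) (comp i J)).2.symm
        _ ≤ comp i (lres I J) ⊔ comp i (lres J I) := by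
            rw [comp_lres hg, comp_lres hg]
        _ ≤ comp i (lres I J ⊔ lres J I) :=
            sup_le (comp_mono le_sup_left) (comp_mono le_sup_right)

end PBL
end

section
/- Let R be a reduced ring with identity. Then R satisfies PBLR-3 if and only if R is a Baer ring, i.e., for every two-sided ideal I of R there exist idempotents e, e' ∈ R such that I^* = eR and I^- = Re'. -/
set_option linter.unnecessarySimpa false

namespace PBL

variable {R : Type*} [NonUnitalRing R]

/-- The annihilator `I^* = {x | x·i = 0 for all i ∈ I}`, a two-sided ideal. -/
def annStar (I : TwoSidedIdeal R) : TwoSidedIdeal R :=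
  TwoSidedIdeal.mk' {x | ∀ i ∈ I, x * i = 0}
    (fun i _ => zero_mul i)
    (fun {x y} hx hy i hi => by rw [add_mul, hx i hi, hy i hi, add_zero])
    (fun {x} hx i hi => by rw [neg_mul, hx i hi, neg_zero])
    (fun {r x} hx i hi => by rw [mul_assoc, hx i hi, mul_zero])
    (fun {x r} hx i hi => by rw [mul_assoc]; exact hx _ (I.mul_mem_left r i hi))

/-- The annihilator `I^- = {x | i·x = 0 for all i ∈ I}`, a two-sided ideal. -/
def annMinus (I : TwoSidedIdeal R) : TwoSidedIdeal R :=
  TwoSidedIdeal.mk' {x | ∀ i ∈ I, i * x = 0}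
    (fun i _ => mul_zero i)
    (fun {x y} hx hy i hi => by rw [mul_add, hx i hi, hy i hi, add_zero])
    (fun {x} hx i hi => by rw [mul_neg, hx i hi, neg_zero])
    (fun {r x} hx i hi => by rw [← mul_assoc]; exact hx _ (I.mul_mem_right i r hi))
    (fun {x r} hx i hi => by rw [← mul_assoc, hx i hi, zero_mul])

variable (R) in
/-- PBLR-3: `I ∩ J = {0}` implies `I^* + J^* = R` and `I^- + J^- = R`. -/
def PBLR3 : Prop :=
  ∀ I J : TwoSidedIdeal R, I ⊓ J = ⊥ →
    annStar I ⊔ annStar J = ⊤ ∧ annMinus I ⊔ annMinus J = ⊤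


section Proof

variable {R : Type*} [Ring R] [IsReduced R]

lemma mem_annStar' {S : Type*} [NonUnitalRing S] {I : TwoSidedIdeal S} {x : S} :
    x ∈ annStar I ↔ ∀ i ∈ I, x * i = 0 :=
  TwoSidedIdeal.mem_mk' _ _ _ _ _ _ _

lemma mem_annMinus' {S : Type*} [NonUnitalRing S] {I : TwoSidedIdeal S} {x : S} :
    x ∈ annMinus I ↔ ∀ i ∈ I, i * x = 0 :=
  TwoSidedIdeal.mem_mk' _ _ _ _ _ _ _

lemma mul_zero_symm {a b : R} (h : a * b = 0) : b * a = 0 := by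
  have : IsNilpotent (b * a) := ⟨2, by rw [pow_two, mul_assoc, ← mul_assoc a b a, h,
    zero_mul, mul_zero]⟩
  exact this.eq_zero

lemma annStar_iff_annMinus {I : TwoSidedIdeal R} {x : R} :
    x ∈ annStar I ↔ x ∈ annMinus I := by
  rw [mem_annStar', mem_annMinus']
  exact ⟨fun h i hi => mul_zero_symm (h i hi), fun h i hi => mul_zero_symm (h i hi)⟩

end Proof

/-- a reduced ring with identity satisfies PBLR-3 iff it is a Baer ring:
for every two-sided ideal `I` there are idempotents `e`, `e'` with `I^* = eR` and
`I^- = Re'`. -/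
theorem stmt_16 {R : Type*} [Ring R] [IsReduced R] :
    PBLR3 R ↔ ∀ I : TwoSidedIdeal R, ∃ e e' : R, e * e = e ∧ e' * e' = e' ∧
      (∀ x : R, x ∈ annStar I ↔ ∃ r : R, x = e * r) ∧
      (∀ x : R, x ∈ annMinus I ↔ ∃ r : R, x = r * e') := by
  constructor
  · intro h I
    -- I ⊓ annStar I = ⊥
    have hIJ : I ⊓ annStar I = ⊥ := by
      refine le_antisymm (fun x hx => ?_) bot_le
      rw [TwoSidedIdeal.mem_inf] at hx
      rw [TwoSidedIdeal.mem_bot]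
      have hxx : x * x = 0 := mem_annStar'.1 hx.2 x hx.1
      exact IsNilpotent.eq_zero ⟨2, by rw [pow_two, hxx]⟩
    obtain ⟨h1, h2⟩ := h I (annStar I) hIJ
    obtain ⟨e, he, f, hf, hef⟩ := TwoSidedIdeal.mem_sup.1 (h1 ▸ TwoSidedIdeal.mem_top (x := (1:R)))
    obtain ⟨e₂, he₂, f₂, hf₂, hef₂⟩ :=
      TwoSidedIdeal.mem_sup.1 (h2 ▸ TwoSidedIdeal.mem_top (x := (1:R)))
    -- idempotency of e
    have hfe : f * e = 0 := mem_annStar'.1 hf e he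
    have hef0 : e * f = 0 := mul_zero_symm hfe
    have hee : e * e = e := by
      have := congrArg (e * ·) hef
      simp only [mul_add, mul_one, hef0, add_zero] at this
      exact this
    -- idempotency of e₂
    have he₂S : e₂ ∈ annStar I := annStar_iff_annMinus.2 he₂
    have hef₂0 : e₂ * f₂ = 0 := mem_annMinus'.1 hf₂ e₂ he₂S
    have hfe₂0 : f₂ * e₂ = 0 := mul_zero_symm hef₂0
    have hee₂ : e₂ * e₂ = e₂ := by
      have := congrArg (· * e₂) hef₂
      simp only [add_mul, one_mul, hfe₂0, add_zero] at this
      exact this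
    refine ⟨e, e₂, hee, hee₂, fun x => ?_, fun x => ?_⟩
    · constructor
      · intro hx
        refine ⟨x, ?_⟩
        have hfx : f * x = 0 := mem_annStar'.1 hf x hx
        have := congrArg (· * x) hef
        simpa [add_mul, hfx] using this.symm
      · rintro ⟨r, rfl⟩
        exact (annStar I).mul_mem_right e r he
    · constructor
      · intro hx
        refine ⟨x, ?_⟩
        have hxS : x ∈ annStar I := annStar_iff_annMinus.2 hx
        have hxf : x * f₂ = 0 := mem_annMinus'.1 hf₂ x hxS
        have := congrArg (x * ·) hef₂
        simpa [mul_add, hxf] using this.symm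
      · rintro ⟨r, rfl⟩
        exact (annMinus I).mul_mem_left r e₂ he₂
  · intro h I J hIJ
    obtain ⟨e, e', hee, hee', hS, hM⟩ := h I
    have heI : e ∈ annStar I := (hS e).2 ⟨e, hee.symm⟩
    have he'I : e' ∈ annMinus I := (hM e').2 ⟨e', hee'.symm⟩
    -- elements of J annihilate I
    have hJS : ∀ j ∈ J, j ∈ annStar I := fun j hj => by
      rw [mem_annStar']
      intro i hi
      have : j * i ∈ I ⊓ J := ⟨I.mul_mem_left j i hi, J.mul_mem_right j i hj⟩
      rw [hIJ, TwoSidedIdeal.mem_bot] at this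
      exact this
    have hJM : ∀ j ∈ J, j ∈ annMinus I := fun j hj => by
      rw [mem_annMinus']
      intro i hi
      have : i * j ∈ I ⊓ J := ⟨I.mul_mem_right i j hi, J.mul_mem_left i j hj⟩
      rw [hIJ, TwoSidedIdeal.mem_bot] at this
      exact this
    constructor
    · have h1e : (1 - e) ∈ annStar J := by
        rw [mem_annStar']
        intro j hj
        obtain ⟨r, rfl⟩ := (hS j).1 (hJS j hj)
        rw [sub_mul, one_mul, ← mul_assoc, hee, sub_self]
      have : (1 : R) ∈ annStar I ⊔ annStar J := by
        have := (annStar I ⊔ annStar J).add_mem (TwoSidedIdeal.mem_sup_left heI)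
          (TwoSidedIdeal.mem_sup_right h1e)
        simpa using this
      exact TwoSidedIdeal.eq_top _ this
    · have h1e : (1 - e') ∈ annMinus J := by
        rw [mem_annMinus']
        intro j hj
        obtain ⟨r, rfl⟩ := (hM j).1 (hJM j hj)
        rw [mul_sub, mul_one, mul_assoc, hee', sub_self]
      have : (1 : R) ∈ annMinus I ⊔ annMinus J := by
        have := (annMinus I ⊔ annMinus J).add_mem (TwoSidedIdeal.mem_sup_left he'I)
          (TwoSidedIdeal.mem_sup_right h1e)
        simpa using this
      exact TwoSidedIdeal.eq_top _ this


end PBL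
end
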